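/- arXiv:2006.00516 — 2 statements merged into one kernel-verified Lean document; each statement's English description precedes it below -/
import Mathlib

section
/- For every integer n ≥ 2, every vector p = (p_1,…,p_n) ∈ [0,1]^n, and every real number q with 0 ≤ q ≤ min_{i∈[n]} p_i and q < 1, there exists a probability distribution θ on {0,1}^n such that P_θ(c_i = 1) = p_i for every i ∈ [n] and P_θ(c_i = 1, c_j = 1) = p_i p_j + (q/(1−q))·(1−p_i)(1−p_j) for every pair 1 ≤ i < j ≤ n. -/
open Finset

noncomputable section

/-- Probability that at least `k` of the `n` coordinates equal `1` under the pmf `θ` on `{0,1}^n`. -/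
def probGE (n : ℕ) (θ : (Fin n → Bool) → ℝ) (k : ℕ) : ℝ :=
  ∑ c ∈ Finset.univ.filter
      (fun c : Fin n → Bool => k ≤ (Finset.univ.filter (fun i => c i = true)).card), θ c

/-- Probability that all `n` coordinates equal `1` under the pmf `θ` on `{0,1}^n`. -/
def probAll (n : ℕ) (θ : (Fin n → Bool) → ℝ) : ℝ :=
  ∑ c ∈ Finset.univ.filter (fun c : Fin n → Bool => ∀ i, c i = true), θ c

/-- `θ` is a probability mass function on `{0,1}^n`. -/
def IsDist (n : ℕ) (θ : (Fin n → Bool) → ℝ) : Prop :=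
  (∀ c, 0 ≤ θ c) ∧ (∑ c, θ c = 1)

/-- Univariate marginal probability `P_θ(c_i = 1)`. -/
def Marg (n : ℕ) (θ : (Fin n → Bool) → ℝ) (i : Fin n) : ℝ :=
  ∑ c ∈ Finset.univ.filter (fun c : Fin n → Bool => c i = true), θ c

/-- Bivariate probability `P_θ(c_i = 1, c_j = 1)`. -/
def Biv (n : ℕ) (θ : (Fin n → Bool) → ℝ) (i j : Fin n) : ℝ :=
  ∑ c ∈ Finset.univ.filter (fun c : Fin n → Bool => c i = true ∧ c j = true), θ c

/-- `θ` is a pairwise independent distribution with marginal vector `p`. -/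
def PairwiseIndep (n : ℕ) (p : Fin n → ℝ) (θ : (Fin n → Bool) → ℝ) : Prop :=
  IsDist n θ ∧ (∀ i, Marg n θ i = p i) ∧
    (∀ i j : Fin n, i < j → Biv n θ i j = p i * p j)

/-
Mix a point mass at the all-ones vector, with weight `q`, and the product of independent
Bernoulli variables with parameters `r i = (p i - q) / (1 - q)`, with weight `1 - q`. The
probability that all coordinates in a set `S` equal `1` is then `q + (1 - q) * ∏ i ∈ S, r i`;
for `S = {i}` this is `p i`, and for `S = {i, j}` it is `q + (p i - q) * (p j - q) / (1 - q)`,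
which is the required bivariate probability.
-/

section BernoulliProduct

variable {ι : Type*} [Fintype ι]

def bernoulliProd (r : ι → ℝ) (c : ι → Bool) : ℝ :=
  ∏ i, if c i then r i else 1 - r i

lemma bernoulliProd_nonneg {r : ι → ℝ} (hr0 : ∀ i, 0 ≤ r i) (hr1 : ∀ i, r i ≤ 1)
    (c : ι → Bool) : 0 ≤ bernoulliProd r c :=
  Finset.prod_nonneg fun i _ => by
    split_ifs
    · exact hr0 i
    · linarith [hr1 i]

def allOnesMixture (q : ℝ) (r : ι → ℝ) (c : ι → Bool) : ℝ :=
  (if c = fun _ => true then q else 0) + (1 - q) * bernoulliProd r c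

lemma allOnesMixture_nonneg {q : ℝ} {r : ι → ℝ} (hq0 : 0 ≤ q) (hq1 : q ≤ 1)
    (hr0 : ∀ i, 0 ≤ r i) (hr1 : ∀ i, r i ≤ 1) (c : ι → Bool) : 0 ≤ allOnesMixture q r c :=
  add_nonneg (by split_ifs <;> simp [hq0])
    (mul_nonneg (sub_nonneg.2 hq1) (bernoulliProd_nonneg hr0 hr1 c))

variable [DecidableEq ι]

lemma sum_filter_forall_mem_eq_true_prod {R : Type*} [CommSemiring R]
    (f : ι → Bool → R) (S : Finset ι) :
    ∑ c ∈ univ.filter (fun c : ι → Bool => ∀ i ∈ S, c i = true), ∏ i, f i (c i) =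
      ∏ i, if i ∈ S then f i true else f i true + f i false := by
  set g : ι → Bool → R := fun i b => if i ∈ S ∧ b = false then 0 else f i b
  have hg : ∀ c : ι → Bool, (if ∀ i ∈ S, c i = true then ∏ i, f i (c i) else 0) =
      ∏ i, g i (c i) := by
    intro c
    split_ifs with hc
    · exact Finset.prod_congr rfl fun i _ => by simp +contextual [g, hc i]
    · push Not at hc
      obtain ⟨i, hiS, hci⟩ := hc
      exact (Finset.prod_eq_zero (Finset.mem_univ i) (by simp [g, hiS, hci])).symm
  rw [Finset.sum_filter, Finset.sum_congr rfl fun c _ => hg c, ← Fintype.prod_sum]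
  refine Finset.prod_congr rfl fun i _ => ?_
  by_cases hi : i ∈ S <;> simp [g, hi]

lemma sum_filter_forall_mem_eq_true_bernoulliProd (r : ι → ℝ) (S : Finset ι) :
    ∑ c ∈ univ.filter (fun c : ι → Bool => ∀ i ∈ S, c i = true), bernoulliProd r c =
      ∏ i ∈ S, r i := by
  refine (sum_filter_forall_mem_eq_true_prod (fun i b => if b then r i else 1 - r i) S).trans ?_
  simp only [if_true, Bool.false_eq_true, if_false, add_sub_cancel, Finset.prod_ite_mem,
    Finset.univ_inter]

lemma sum_filter_forall_mem_eq_true_allOnesMixture (q : ℝ) (r : ι → ℝ) (S : Finset ι) :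
    ∑ c ∈ univ.filter (fun c : ι → Bool => ∀ i ∈ S, c i = true), allOnesMixture q r c =
      q + (1 - q) * ∏ i ∈ S, r i := by
  simp only [allOnesMixture]
  rw [Finset.sum_add_distrib, Finset.sum_ite_eq', ← Finset.mul_sum,
    sum_filter_forall_mem_eq_true_bernoulliProd]
  simp

lemma sum_allOnesMixture (q : ℝ) (r : ι → ℝ) : ∑ c, allOnesMixture q r c = 1 := by
  simpa using sum_filter_forall_mem_eq_true_allOnesMixture q r ∅

end BernoulliProduct

section FinBool

variable {n : ℕ} (q : ℝ) (r : Fin n → ℝ)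

lemma marg_allOnesMixture (i : Fin n) : Marg n (allOnesMixture q r) i = q + (1 - q) * r i := by
  rw [← prod_singleton r i, ← sum_filter_forall_mem_eq_true_allOnesMixture]
  simp [Marg]

lemma biv_allOnesMixture {i j : Fin n} (hij : i ≠ j) :
    Biv n (allOnesMixture q r) i j = q + (1 - q) * (r i * r j) := by
  rw [← prod_pair hij, ← sum_filter_forall_mem_eq_true_allOnesMixture]
  simp [Biv]

end FinBool

theorem stmt_1_general (n : ℕ) (p : Fin n → ℝ)
    (hp1 : ∀ i, p i ≤ 1)
    (q : ℝ) (hq0 : 0 ≤ q) (hq1 : q < 1) (hqp : ∀ i, q ≤ p i) :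
    ∃ θ : (Fin n → Bool) → ℝ, IsDist n θ ∧ (∀ i, Marg n θ i = p i) ∧
      (∀ i j : Fin n, i < j →
        Biv n θ i j = p i * p j + (q / (1 - q)) * (1 - p i) * (1 - p j)) := by
  have h1q : 0 < 1 - q := sub_pos.2 hq1
  set r : Fin n → ℝ := fun i => (p i - q) / (1 - q)
  have hr0 : ∀ i, 0 ≤ r i := fun i => div_nonneg (sub_nonneg.2 (hqp i)) h1q.le
  have hr1 : ∀ i, r i ≤ 1 := fun i => (div_le_one h1q).2 (by linarith [hp1 i])
  have hr : ∀ i, q + (1 - q) * r i = p i := fun i => by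
    rw [mul_div_cancel₀ _ h1q.ne']
    ring
  refine ⟨allOnesMixture q r, ⟨allOnesMixture_nonneg hq0 hq1.le hr0 hr1, sum_allOnesMixture q r⟩,
    fun i => (marg_allOnesMixture q r i).trans (hr i), fun i j hij => ?_⟩
  rw [biv_allOnesMixture q r hij.ne, ← hr i, ← hr j]
  field_simp
  ring

theorem stmt_1 (n : ℕ) (hn : 2 ≤ n) (p : Fin n → ℝ)
    (hp0 : ∀ i, 0 ≤ p i) (hp1 : ∀ i, p i ≤ 1)
    (q : ℝ) (hq0 : 0 ≤ q) (hq1 : q < 1) (hqp : ∀ i, q ≤ p i) :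
    ∃ θ : (Fin n → Bool) → ℝ, IsDist n θ ∧ (∀ i, Marg n θ i = p i) ∧
      (∀ i j : Fin n, i < j →
        Biv n θ i j = p i * p j + (q / (1 - q)) * (1 - p i) * (1 - p j)) :=
  stmt_1_general n p hp1 q hq0 hq1 hqp
end
end

section
/- Let n ≥ 2, let t be an integer with 2 ≤ t ≤ n, let p ∈ (0,1), and let k be an integer with 1 ≤ k ≤ n. Then the supremum of P_θ(∑_{i=1}^n c_i ≥ k) over all t-wise independent distributions θ with identical marginal probability p equals the supremum of ∑_{ℓ=k}^n v_ℓ over all vectors (v_0, v_1, …, v_n) of nonnegative reals satisfying ∑_{ℓ=m}^n C(ℓ,m)·v_ℓ = C(n,m)·p^m for every integer m with 0 ≤ m ≤ t, where C(a,b) denotes the binomial coefficient. -/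
open Finset

noncomputable section

/-- `θ` is a `t`-wise independent distribution on `{0,1}^n` with identical marginal
probability `p`. -/
def TWiseIndep (n t : ℕ) (p : ℝ) (θ : (Fin n → Bool) → ℝ) : Prop :=
  IsDist n θ ∧
    ∀ J : Finset (Fin n), J.Nonempty → J.card ≤ t →
      (∑ c ∈ Finset.univ.filter (fun c : Fin n → Bool => ∀ i ∈ J, c i = true), θ c) =
        p ^ J.card

/-!
Both suprema are taken over the same set of values. Identify `c ∈ {0,1}^n` with its set of ones.
A `t`-wise independent `θ` gives the vector `v ℓ = P_θ(|c| = ℓ)`: counting the pairs `(J, c)` with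
`|J| = m` and `J ⊆ c` gives `∑ ℓ, C(ℓ, m) v ℓ = ∑_{|J| = m} P_θ(J ⊆ c) = C(n, m) p^m`.
Conversely, spreading `v ℓ` uniformly over the `C(n, ℓ)` points of level `ℓ` gives a distribution for which
`P(J ⊆ c) = ∑ ℓ, C(n - m, ℓ - m) v ℓ / C(n, ℓ) = ∑ ℓ, C(ℓ, m) v ℓ / C(n, m) = p^m` whenever `|J| = m ≤ t`.
-/

section Levels

variable {α : Type*} [Fintype α]

def ones (c : α → Bool) : Finset α := univ.filter fun i => c i = true

def levelUniform (v : ℕ → ℝ) (c : α → Bool) : ℝ :=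
  v #(ones c) / (Fintype.card α).choose #(ones c)

variable [DecidableEq α]

def cardProfile (θ : (α → Bool) → ℝ) (ℓ : ℕ) : ℝ :=
  ∑ c with #(ones c) = ℓ, θ c

def onesEquiv : (α → Bool) ≃ Finset α where
  toFun := ones
  invFun S i := decide (i ∈ S)
  left_inv c := by
    funext i
    cases h : c i <;> simp [ones, h]
  right_inv S := by
    ext i
    simp [ones]

theorem card_filter_card_ones_eq (ℓ : ℕ) :
    #{c : α → Bool | #(ones c) = ℓ} = (Fintype.card α).choose ℓ := by
  rw [← card_univ, ← card_powersetCard]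
  exact card_equiv onesEquiv fun c => by simp [onesEquiv]

theorem card_filter_subset_ones (J : Finset α) {ℓ : ℕ} (hJ : #J ≤ ℓ) :
    #{c : α → Bool | J ⊆ ones c ∧ #(ones c) = ℓ} =
      (Fintype.card α - #J).choose (ℓ - #J) := by
  rw [← card_univ, ← card_filter_powersetCard_subset J univ ℓ (subset_univ J) hJ]
  exact card_equiv onesEquiv fun c => by simp [onesEquiv, and_comm]

theorem sum_Icc_choose_mul_cardProfile (θ : (α → Bool) → ℝ) (m : ℕ) :
    ∑ ℓ ∈ Icc m (Fintype.card α), (ℓ.choose m : ℝ) * cardProfile θ ℓ =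
      ∑ J ∈ powersetCard m univ, ∑ c with J ⊆ ones c, θ c := by
  calc ∑ ℓ ∈ Icc m (Fintype.card α), (ℓ.choose m : ℝ) * cardProfile θ ℓ
      = ∑ c with #(ones c) ∈ Icc m (Fintype.card α), (#(ones c)).choose m * θ c := by
        rw [← sum_fiberwise_eq_sum_filter]
        refine sum_congr rfl fun ℓ _ => ?_
        rw [cardProfile, mul_sum]
        exact sum_congr rfl fun c hc => by rw [(mem_filter.1 hc).2]
    _ = ∑ c, (#(ones c)).choose m * θ c := by
        refine sum_filter_of_ne fun c _ hc => mem_Icc.2 ⟨?_, card_le_univ _⟩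
        by_contra! h
        simp [Nat.choose_eq_zero_of_lt h] at hc
    _ = ∑ c, ∑ J ∈ powersetCard m univ with J ⊆ ones c, θ c := by
        refine sum_congr rfl fun c _ => ?_
        have hsubsets : (powersetCard m univ).filter (· ⊆ ones c) = powersetCard m (ones c) := by
          ext J
          simp only [mem_filter, mem_powersetCard, subset_univ, true_and]
          tauto
        rw [hsubsets, sum_const, card_powersetCard, nsmul_eq_mul]
    _ = ∑ J ∈ powersetCard m univ, ∑ c with J ⊆ ones c, θ c := by
        simp only [sum_filter]
        exact sum_comm

theorem sum_filter_subset_ones_of_card (u : ℕ → ℝ) (J : Finset α) :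
    ∑ c with J ⊆ ones c, u #(ones c) =
      ∑ ℓ ∈ Icc #J (Fintype.card α), ((Fintype.card α - #J).choose (ℓ - #J) : ℝ) * u ℓ := by
  rw [← sum_fiberwise_of_maps_to (g := fun c => #(ones c)) (t := Icc #J (Fintype.card α))
    fun c hc => mem_Icc.2 ⟨card_le_card (mem_filter.1 hc).2, card_le_univ _⟩]
  refine sum_congr rfl fun ℓ hℓ => ?_
  rw [filter_filter, ← card_filter_subset_ones J (mem_Icc.1 hℓ).1, ← nsmul_eq_mul, ← sum_const]
  exact sum_congr rfl fun c hc => by rw [(mem_filter.1 hc).2.2]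

theorem cardProfile_levelUniform (v : ℕ → ℝ) {ℓ : ℕ} (hℓ : ℓ ≤ Fintype.card α) :
    cardProfile (levelUniform (α := α) v) ℓ = v ℓ := by
  have hchoose : ((Fintype.card α).choose ℓ : ℝ) ≠ 0 := by
    exact_mod_cast (Nat.choose_pos hℓ).ne'
  calc cardProfile (levelUniform (α := α) v) ℓ
      = ∑ c : α → Bool with #(ones c) = ℓ, v ℓ / (Fintype.card α).choose ℓ :=
        sum_congr rfl fun c hc => by rw [levelUniform, (mem_filter.1 hc).2]
    _ = v ℓ := by
        rw [sum_const, card_filter_card_ones_eq, nsmul_eq_mul]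
        field_simp

theorem sum_filter_subset_ones_levelUniform (v : ℕ → ℝ) (J : Finset α) :
    ∑ c with J ⊆ ones c, levelUniform v c =
      (∑ ℓ ∈ Icc #J (Fintype.card α), (ℓ.choose #J : ℝ) * v ℓ) / (Fintype.card α).choose #J := by
  have hchooseJ : ((Fintype.card α).choose #J : ℝ) ≠ 0 := by
    exact_mod_cast (Nat.choose_pos (card_le_univ J)).ne'
  refine (sum_filter_subset_ones_of_card
    (fun ℓ => v ℓ / ((Fintype.card α).choose ℓ : ℝ)) J).trans ?_
  rw [sum_div]
  refine sum_congr rfl fun ℓ hℓ => ?_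
  obtain ⟨hJℓ, hℓα⟩ := mem_Icc.1 hℓ
  have hchooseℓ : ((Fintype.card α).choose ℓ : ℝ) ≠ 0 := by
    exact_mod_cast (Nat.choose_pos hℓα).ne'
  have hmul : ((Fintype.card α).choose ℓ * ℓ.choose #J : ℝ) =
      (Fintype.card α).choose #J * (Fintype.card α - #J).choose (ℓ - #J) := by
    exact_mod_cast Nat.choose_mul (n := Fintype.card α) hJℓ
  field_simp
  linear_combination -v ℓ * hmul

end Levels

theorem probGE_eq_sum_cardProfile (n : ℕ) (θ : (Fin n → Bool) → ℝ) (k : ℕ) :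
    probGE n θ k = ∑ ℓ ∈ Icc k n, cardProfile θ ℓ := by
  simp only [probGE, cardProfile]
  rw [sum_fiberwise_eq_sum_filter]
  refine sum_congr (filter_congr fun c _ => ?_) fun _ _ => rfl
  simpa [mem_Icc, ones] using fun _ => card_le_univ (ones c)

theorem TWiseIndep.sum_filter_subset_ones {n t : ℕ} {p : ℝ} {θ : (Fin n → Bool) → ℝ}
    (hθ : TWiseIndep n t p θ) {J : Finset (Fin n)} (hJ : #J ≤ t) :
    ∑ c with J ⊆ ones c, θ c = p ^ #J := by
  obtain rfl | hne := J.eq_empty_or_nonempty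
  · simpa using hθ.1.2
  rw [← hθ.2 J hne hJ]
  exact sum_congr (filter_congr fun c _ => by simp [ones, subset_iff]) fun _ _ => rfl

theorem TWiseIndep.sum_Icc_choose_mul_cardProfile {n t : ℕ} {p : ℝ} {θ : (Fin n → Bool) → ℝ}
    (hθ : TWiseIndep n t p θ) {m : ℕ} (hm : m ≤ t) :
    ∑ ℓ ∈ Icc m n, (ℓ.choose m : ℝ) * cardProfile θ ℓ = (n.choose m : ℝ) * p ^ m := by
  have hJ : ∀ J ∈ powersetCard m (univ : Finset (Fin n)), ∑ c with J ⊆ ones c, θ c = p ^ m :=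
    fun J hJ => by
      obtain ⟨-, rfl⟩ := mem_powersetCard.1 hJ
      exact hθ.sum_filter_subset_ones hm
  have hcount := _root_.sum_Icc_choose_mul_cardProfile θ m
  rw [Fintype.card_fin] at hcount
  rw [hcount, sum_congr rfl hJ, sum_const, card_powersetCard, card_univ, Fintype.card_fin,
    nsmul_eq_mul]

theorem twiseIndep_levelUniform {n t : ℕ} {p : ℝ} {v : ℕ → ℝ} (hv : ∀ ℓ, 0 ≤ v ℓ)
    (hmom : ∀ m ≤ t, ∑ ℓ ∈ Icc m n, (ℓ.choose m : ℝ) * v ℓ = (n.choose m : ℝ) * p ^ m) :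
    TWiseIndep n t p (levelUniform v) := by
  have hsuper : ∀ J : Finset (Fin n), #J ≤ t → ∑ c with J ⊆ ones c, levelUniform v c = p ^ #J := by
    intro J hJ
    have hchoose : (n.choose #J : ℝ) ≠ 0 := by
      exact_mod_cast (Nat.choose_pos (by simpa using card_le_univ J)).ne'
    rw [sum_filter_subset_ones_levelUniform, Fintype.card_fin, hmom #J hJ]
    field_simp
  refine ⟨⟨fun c => div_nonneg (hv _) (Nat.cast_nonneg _), ?_⟩, fun J _ hJ => ?_⟩
  · simpa using hsuper ∅ (Nat.zero_le t)
  · rw [← hsuper J hJ]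
    exact sum_congr (filter_congr fun c _ => by simp [ones, subset_iff]) fun _ _ => rfl

theorem stmt_14_general (n t k : ℕ)
    (p : ℝ) :
    sSup {x : ℝ | ∃ θ : (Fin n → Bool) → ℝ, TWiseIndep n t p θ ∧ probGE n θ k = x} =
    sSup {x : ℝ | ∃ v : ℕ → ℝ, (∀ ℓ, 0 ≤ v ℓ) ∧
      (∀ m : ℕ, m ≤ t →
        (∑ ℓ ∈ Finset.Icc m n, (ℓ.choose m : ℝ) * v ℓ) = (n.choose m : ℝ) * p ^ m) ∧
      x = ∑ ℓ ∈ Finset.Icc k n, v ℓ} := by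
  congr 1
  ext x
  constructor
  · rintro ⟨θ, hθ, rfl⟩
    exact ⟨cardProfile θ, fun ℓ => sum_nonneg fun c _ => hθ.1.1 c,
      fun m hm => hθ.sum_Icc_choose_mul_cardProfile hm, probGE_eq_sum_cardProfile n θ k⟩
  · rintro ⟨v, hv, hmom, rfl⟩
    refine ⟨levelUniform v, twiseIndep_levelUniform hv hmom, ?_⟩
    rw [probGE_eq_sum_cardProfile]
    refine sum_congr rfl fun ℓ hℓ => cardProfile_levelUniform v ?_
    simpa using (mem_Icc.1 hℓ).2

theorem stmt_14 (n t k : ℕ) (hn : 2 ≤ n) (ht2 : 2 ≤ t) (htn : t ≤ n)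
    (hk1 : 1 ≤ k) (hkn : k ≤ n)
    (p : ℝ) (hp0 : 0 < p) (hp1 : p < 1) :
    sSup {x : ℝ | ∃ θ : (Fin n → Bool) → ℝ, TWiseIndep n t p θ ∧ probGE n θ k = x} =
    sSup {x : ℝ | ∃ v : ℕ → ℝ, (∀ ℓ, 0 ≤ v ℓ) ∧
      (∀ m : ℕ, m ≤ t →
        (∑ ℓ ∈ Finset.Icc m n, (ℓ.choose m : ℝ) * v ℓ) = (n.choose m : ℝ) * p ^ m) ∧
      x = ∑ ℓ ∈ Finset.Icc k n, v ℓ} :=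
  stmt_14_general n t k p
end
end
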